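/- arXiv:1701.06088 — 8 statements merged into one kernel-verified Lean document; each statement's English description precedes it below -/
import Mathlib

section
/- Let n and m be natural numbers with n ≥ 2 and 1 ≤ m ≤ n, let τ ∈ (0,1), and let a, b ≥ 0 be reals. With p_w := (n choose w)·(1/m)^w·(1 − 1/m)^{n−w}, M₁ := ∑_{w=1}^{n} p_w·⌈wτ⌉/(w+1) and M₂ := ∑_{w=1}^{n} p_w·⌈wτ⌉·(⌈wτ⌉+1)/((w+1)(w+2)), one has (n/m)·|a·(M₂ − τ²) + b·(M₁ − τ)| ≥ a·τ·(1−τ)/200 − (n/m)·b·|M₁ − τ| − 2a·(n/m)·|M₁ − τ|. -/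
open Finset

lemma aux_scalar (W τ c : ℝ) (hW : 1 ≤ W) (hτ0 : 0 < τ) (hτ1 : τ < 1)
    (hc1 : W * τ ≤ c) (hc2 : c ≤ W * τ + 1) :
    τ * (1 - τ) / (12 * W) ≤ c * (c + 1) / ((W + 1) * (W + 2)) - 2 * τ * (c / (W + 1)) + τ ^ 2 := by
  have hW0 : (0:ℝ) < W := by linarith
  have h1 : c * (c + 1) / ((W + 1) * (W + 2)) - 2 * τ * (c / (W + 1)) + τ ^ 2
      = c * (W + 1 - c) / ((W + 1) ^ 2 * (W + 2)) + (c / (W + 1) - τ) ^ 2 := by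
    field_simp
    ring
  rw [h1]
  have h2 : τ * (1 - τ) / (12 * W) ≤ c * (W + 1 - c) / ((W + 1) ^ 2 * (W + 2)) := by
    rw [div_le_div_iff₀ (by positivity) (by positivity)]
    have hcpos : 0 < c := lt_of_lt_of_le (by positivity) hc1
    have h3 : W * (1 - τ) ≤ W + 1 - c := by linarith
    have h4 : (W * τ) * (W * (1 - τ)) ≤ c * (W + 1 - c) :=
      mul_le_mul hc1 h3 (by nlinarith) hcpos.le
    have h5 : (W + 1) ^ 2 * (W + 2) ≤ 12 * W ^ 3 := by
      nlinarith [sq_nonneg (W - 1), mul_nonneg (sq_nonneg (W-1)) (by linarith : (0:ℝ) ≤ W - 1)]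
    have h6 : 0 < τ * (1 - τ) := by nlinarith
    nlinarith [mul_le_mul_of_nonneg_left h5 h6.le]
  nlinarith [sq_nonneg (c / (W + 1) - τ)]

lemma aux_EW (n m : ℕ) (hn : 2 ≤ n)
    (p : ℕ → ℝ)
    (hp : ∀ w, p w = (n.choose w : ℝ) * (1 / (m : ℝ)) ^ w * (1 - 1 / (m : ℝ)) ^ (n - w)) :
    ∑ w ∈ Finset.Icc 1 n, p w * w = (n : ℝ) * (1 / m) := by
  set q : ℝ := 1 / m with hq
  rw [← Finset.Ico_add_one_right_eq_Icc, Finset.sum_Ico_eq_sum_range, Nat.add_sub_cancel]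
  have key : ∀ k ∈ range n, p (1 + k) * ((1 + k : ℕ) : ℝ)
      = (n : ℝ) * q * (q ^ k * (1 - q) ^ ((n-1) - k) * (((n-1).choose k : ℝ))) := by
    intro k hk
    have hkn : k < n := Finset.mem_range.mp hk
    have hid : (k + 1) * n.choose (k + 1) = n * (n-1).choose k := by
      have h := Nat.add_one_mul_choose_eq (n-1) k
      have hs : n - 1 + 1 = n := by omega
      simp only [Nat.succ_eq_add_one, hs] at h
      simpa [mul_comm] using h.symm
    have hexp : n - (k + 1) = (n - 1) - k := by omega
    rw [hp (1 + k), show 1 + k = k + 1 from by omega, hexp]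
    have hcast : ((k + 1 : ℕ) : ℝ) * (n.choose (k + 1) : ℝ) = (n : ℝ) * ((n-1).choose k : ℝ) := by
      exact_mod_cast congrArg (Nat.cast : ℕ → ℝ) hid
    push_cast at hcast ⊢
    linear_combination (q ^ (k+1) * (1 - q) ^ (n - 1 - k)) * hcast
  rw [Finset.sum_congr rfl key, ← Finset.mul_sum]
  have hb := add_pow q (1 - q) (n - 1)
  simp only [add_sub_cancel, one_pow] at hb
  have hrange : range ((n-1)+1) = range n := by congr 1; omega
  rw [hrange] at hb
  rw [← hb, mul_one]

theorem stmt0 (n m : ℕ) (hn : 2 ≤ n) (hm1 : 1 ≤ m) (hmn : m ≤ n)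
    (τ : ℝ) (hτ0 : 0 < τ) (hτ1 : τ < 1)
    (a b : ℝ) (ha : 0 ≤ a) (hb : 0 ≤ b)
    (p : ℕ → ℝ)
    (hp : ∀ w, p w = (n.choose w : ℝ) * (1 / (m : ℝ)) ^ w * (1 - 1 / (m : ℝ)) ^ (n - w))
    (M₁ M₂ : ℝ)
    (hM₁ : M₁ = ∑ w ∈ Finset.Icc 1 n, p w * (⌈(w : ℝ) * τ⌉ : ℝ) / ((w : ℝ) + 1))
    (hM₂ : M₂ = ∑ w ∈ Finset.Icc 1 n,
      p w * (⌈(w : ℝ) * τ⌉ : ℝ) * ((⌈(w : ℝ) * τ⌉ : ℝ) + 1) / (((w : ℝ) + 1) * ((w : ℝ) + 2))) :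
    (n : ℝ) / (m : ℝ) * |a * (M₂ - τ ^ 2) + b * (M₁ - τ)| ≥
      a * τ * (1 - τ) / 200 - (n : ℝ) / (m : ℝ) * b * |M₁ - τ|
        - 2 * a * ((n : ℝ) / (m : ℝ)) * |M₁ - τ| := by
  have hm0 : (0:ℝ) < m := by exact_mod_cast hm1
  set q : ℝ := 1 / m with hq
  have hq0 : 0 < q := by positivity
  have hq1 : q ≤ 1 := by
    rw [hq, div_le_one hm0]; exact_mod_cast hm1
  have h1q : 0 ≤ 1 - q := by linarith
  have hpnn : ∀ w, 0 ≤ p w := by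
    intro w; rw [hp w]; positivity
  -- total probability = 1
  have hsum_all : ∑ w ∈ Finset.range (n+1), p w = 1 := by
    have h := add_pow q (1 - q) n
    simp only [add_sub_cancel, one_pow] at h
    rw [show (1:ℝ) = ∑ k ∈ range (n+1), q ^ k * (1 - q) ^ (n - k) * (n.choose k : ℝ) from h]
    exact Finset.sum_congr rfl fun w _ => by rw [hp w]; ring
  have hshift : ∀ f : ℕ → ℝ, ∑ w ∈ Finset.Icc 1 n, f w = ∑ k ∈ range n, f (k+1) := by
    intro f
    rw [← Finset.Ico_add_one_right_eq_Icc, Finset.sum_Ico_eq_sum_range, Nat.add_sub_cancel]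
    exact Finset.sum_congr rfl fun k _ => by rw [add_comm]
  have hIccsum : ∑ w ∈ Finset.Icc 1 n, p w = 1 - p 0 := by
    have h := Finset.sum_range_succ' p n
    rw [hsum_all] at h
    rw [hshift p]
    linarith
  have hp0 : p 0 = (1 - q) ^ n := by rw [hp 0]; simp
  -- p 0 ≤ 1/2
  have hp0le : p 0 ≤ 1/2 := by
    rw [hp0]
    have h1 : (1 - q) ^ n ≤ (1 - q) ^ m :=
      pow_le_pow_of_le_one h1q (by linarith) hmn
    have h2 : 1 - q ≤ Real.exp (-q) := by
      have := Real.add_one_le_exp (-q); linarith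
    have h3 : (1 - q) ^ m ≤ (Real.exp (-q)) ^ m := pow_le_pow_left₀ h1q h2 m
    have h4 : (Real.exp (-q)) ^ m = Real.exp (-1) := by
      rw [← Real.exp_nat_mul]
      congr 1
      rw [hq]
      field_simp
    have h5 : Real.exp (-1) ≤ 1/2 := by
      rw [Real.exp_neg]
      have h6 : (2:ℝ) ≤ Real.exp 1 := by
        have := Real.add_one_le_exp 1; linarith
      rw [inv_eq_one_div]
      exact one_div_le_one_div_of_le (by norm_num) h6
    linarith
  -- expected value of W restricted to W ≥ 1
  have hEW : ∑ w ∈ Finset.Icc 1 n, p w * w = (n : ℝ) * q := aux_EW n m hn p hp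
  set S : ℝ := ∑ w ∈ Finset.Icc 1 n, p w / w with hS
  have hnq0 : 0 < (n : ℝ) * q := by positivity
  -- Cauchy-Schwarz
  have hCS : (∑ w ∈ Finset.Icc 1 n, p w) ^ 2 ≤ S * ((n:ℝ) * q) := by
    rw [hS, ← hEW]
    refine Finset.sum_sq_le_sum_mul_sum_of_sq_eq_mul (Finset.Icc 1 n)
      (f := fun w => p w / w) (g := fun w => p w * w) ?_ ?_ ?_
    · intro i hi; exact div_nonneg (hpnn i) (by positivity)
    · intro i hi; exact mul_nonneg (hpnn i) (by positivity)
    · intro i hi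
      have hi1 : 1 ≤ i := (Finset.mem_Icc.mp hi).1
      have hi0 : ((i:ℝ)) ≠ 0 := by positivity
      field_simp
  have hCS4 : 1/4 ≤ S * ((n:ℝ) * q) := by
    have hhalf : (1/2 : ℝ) ≤ 1 - p 0 := by linarith
    have : (1/2:ℝ)^2 ≤ (1 - p 0)^2 := by nlinarith [hpnn 0]
    rw [hIccsum] at hCS
    nlinarith
  -- second moment about τ
  set T : ℝ := M₂ - 2*τ*M₁ + τ^2*(1 - p 0) with hTdef
  have hT : ∑ w ∈ Finset.Icc 1 n,
      (p w * (⌈(w : ℝ) * τ⌉ : ℝ) * ((⌈(w : ℝ) * τ⌉ : ℝ) + 1) / (((w : ℝ) + 1) * ((w : ℝ) + 2))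
        - 2*τ*(p w * (⌈(w : ℝ) * τ⌉ : ℝ) / ((w : ℝ) + 1)) + τ^2 * p w) = T := by
    rw [hTdef, Finset.sum_add_distrib, Finset.sum_sub_distrib, ← Finset.mul_sum,
      ← Finset.mul_sum, hM₁, hM₂, hIccsum]
  have hsum_le : τ*(1-τ)/12 * S ≤ T := by
    rw [← hT, hS, Finset.mul_sum]
    refine Finset.sum_le_sum ?_
    intro w hw
    have hw1 : 1 ≤ w := (Finset.mem_Icc.mp hw).1
    have hW1 : (1:ℝ) ≤ (w:ℝ) := by exact_mod_cast hw1
    have hW0 : (0:ℝ) < (w:ℝ) := by linarith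
    set c : ℝ := (⌈(w : ℝ) * τ⌉ : ℝ) with hc
    have hc1 : (w:ℝ) * τ ≤ c := Int.le_ceil _
    have hc2 : c ≤ (w:ℝ) * τ + 1 := (Int.ceil_lt_add_one _).le
    have hs := aux_scalar (w:ℝ) τ c hW1 hτ0 hτ1 hc1 hc2
    calc τ*(1-τ)/12 * (p w / w) = p w * (τ*(1-τ)/(12*(w:ℝ))) := by ring
      _ ≤ p w * (c*(c+1)/(((w:ℝ)+1)*((w:ℝ)+2)) - 2*τ*(c/((w:ℝ)+1)) + τ^2) :=
          mul_le_mul_of_nonneg_left hs (hpnn w)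
      _ = p w * c * (c+1)/(((w:ℝ)+1)*((w:ℝ)+2)) - 2*τ*(p w * c/((w:ℝ)+1)) + τ^2 * p w := by
          ring
  -- key lower bound : (n*q) * T ≥ τ(1-τ)/48
  have hττ : (0:ℝ) ≤ τ * (1 - τ) := by nlinarith
  have h48 : τ*(1-τ)/48 ≤ ((n:ℝ)*q) * T := by
    have h1 : ((n:ℝ)*q) * (τ*(1-τ)/12 * S) ≤ ((n:ℝ)*q) * T :=
      mul_le_mul_of_nonneg_left hsum_le hnq0.le
    have h2 : τ*(1-τ)/12 * (1/4) ≤ τ*(1-τ)/12 * (S*((n:ℝ)*q)) :=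
      mul_le_mul_of_nonneg_left hCS4 (by linarith)
    calc τ*(1-τ)/48 = τ*(1-τ)/12*(1/4) := by ring
      _ ≤ τ*(1-τ)/12*(S*((n:ℝ)*q)) := h2
      _ = ((n:ℝ)*q)*(τ*(1-τ)/12*S) := by ring
      _ ≤ ((n:ℝ)*q)*T := h1
  -- assemble
  set r : ℝ := (n:ℝ)/(m:ℝ) with hr
  have hrq : r = (n:ℝ) * q := by rw [hr, hq]; ring
  have hr0 : 0 < r := by rw [hrq]; exact hnq0
  set X : ℝ := M₂ - τ^2 with hX
  set Y : ℝ := M₁ - τ with hY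
  have hXT : T + 2*τ*Y ≤ X := by
    have hp00 : 0 ≤ τ^2 * p 0 := mul_nonneg (sq_nonneg τ) (hpnn 0)
    rw [hTdef, hX, hY]; linarith
  clear_value T S r X Y
  have hrX : τ*(1-τ)/48 - 2*(r*|Y|) ≤ r*X := by
    have h1 : r*(T + 2*τ*Y) ≤ r*X := mul_le_mul_of_nonneg_left hXT hr0.le
    have h2 : -(r*|Y|) ≤ r*Y := by
      have h3 := neg_abs_le (r*Y)
      rw [abs_mul, abs_of_nonneg hr0.le] at h3
      exact h3
    have h4 : 2*τ*(-(r*|Y|)) ≤ 2*τ*(r*Y) :=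
      mul_le_mul_of_nonneg_left h2 (by linarith : (0:ℝ) ≤ 2*τ)
    have hry : 0 ≤ r*|Y| := mul_nonneg hr0.le (abs_nonneg _)
    have h5 : (2*τ)*(r*|Y|) ≤ 2*(r*|Y|) :=
      mul_le_mul_of_nonneg_right (by linarith : 2*τ ≤ 2) hry
    have h6 := h48
    rw [← hrq] at h6
    have h7 : r*(T + 2*τ*Y) = r*T + 2*τ*(r*Y) := by ring
    linarith [h1, h4, h5, h6, h7]
  have habs : r*(a*X + b*Y) ≤ r*|a*X + b*Y| :=
    mul_le_mul_of_nonneg_left (le_abs_self _) hr0.le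
  have hA : a*(τ*(1-τ)/48 - 2*(r*|Y|)) ≤ a*(r*X) := mul_le_mul_of_nonneg_left hrX ha
  have hBneg : -(r*|Y|) ≤ r*Y := by
    have h3 := neg_abs_le (r*Y)
    rw [abs_mul, abs_of_nonneg hr0.le] at h3
    exact h3
  have hB : b*(-(r*|Y|)) ≤ b*(r*Y) := mul_le_mul_of_nonneg_left hBneg hb
  have haττ : 0 ≤ a*(τ*(1-τ)) := mul_nonneg ha hττ
  have heq : r*(a*X + b*Y) = a*(r*X) + b*(r*Y) := by ring
  linarith [habs, hA, hB, heq, haττ]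
end

section
/- Let n and m be natural numbers with n ≥ 2 and 1 ≤ m ≤ n, and let τ ∈ (0,1). Then ∑_{w=1}^{n} (n choose w)·(1/m)^w·(1 − 1/m)^{n−w} · ⌈wτ⌉·(w+1−⌈wτ⌉)/((w+1)²·(w+2)) ≥ (m/n)·τ·(1−τ)/200. -/
open Finset

set_option maxHeartbeats 1000000

theorem stmt1 (n m : ℕ) (hn : 2 ≤ n) (hm1 : 1 ≤ m) (hmn : m ≤ n)
    (τ : ℝ) (hτ0 : 0 < τ) (hτ1 : τ < 1) :
    ∑ w ∈ Finset.Icc 1 n,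
        (n.choose w : ℝ) * (1 / (m : ℝ)) ^ w * (1 - 1 / (m : ℝ)) ^ (n - w) *
          ((⌈(w : ℝ) * τ⌉ : ℝ) * ((w : ℝ) + 1 - (⌈(w : ℝ) * τ⌉ : ℝ)) /
            (((w : ℝ) + 1) ^ 2 * ((w : ℝ) + 2)))
      ≥ (m : ℝ) / (n : ℝ) * τ * (1 - τ) / 200 := by
  have hm0 : (0:ℝ) < m := by exact_mod_cast hm1
  have hn0 : (0:ℝ) < n := by positivity
  set q : ℝ := 1 / (m:ℝ) with hqdef
  have hq0 : 0 < q := by positivity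
  have hq1 : q ≤ 1 := by
    rw [hqdef, div_le_one hm0]; exact_mod_cast hm1
  set r : ℝ := 1 - q with hrdef
  have hr0 : 0 ≤ r := by linarith
  have hr1 : r ≤ 1 := by linarith
  set p : ℕ → ℝ := fun w => (n.choose w : ℝ) * q ^ w * r ^ (n - w) with hpdef
  have hp0 : ∀ w, 0 ≤ p w := fun w => by positivity
  -- total sum = 1 over range (n+1), for any exponent N
  have htot : ∀ N : ℕ, ∑ k ∈ range (N+1), (N.choose k : ℝ) * q ^ k * r ^ (N - k) = 1 := by
    intro N
    have h := add_pow q r N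
    have hqr : q + r = 1 := by rw [hrdef]; ring
    rw [hqr, one_pow] at h
    rw [h]
    exact Finset.sum_congr rfl fun k _ => by ring
  -- P := sum of p over Icc 1 n
  set P : ℝ := ∑ w ∈ Icc 1 n, p w with hPdef
  have hIcc : (Icc 1 n : Finset ℕ) = Ico 1 (n+1) := by rw [Finset.Ico_add_one_right_eq_Icc]
  have hP_eq : P = 1 - r ^ n := by
    have h1 : ∑ w ∈ range (n+1), p w = 1 := by
      have := htot n
      rw [← this]
    have h2 : ∑ w ∈ range (n+1), p w = P + p 0 := by
      rw [Finset.sum_range_succ' p n, hPdef, hIcc, Finset.sum_Ico_eq_sum_range]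
      simp only [Nat.add_sub_cancel]
      congr 1
      exact Finset.sum_congr rfl fun k _ => by rw [add_comm]
    have hp00 : p 0 = r ^ n := by simp [hpdef]
    rw [h2, hp00] at h1; linarith
  -- P ≥ 1/2
  have hrm : r ^ n ≤ 1/2 := by
    have h1 : r ^ n ≤ r ^ m := pow_le_pow_of_le_one hr0 hr1 hmn
    have h2 : r ≤ Real.exp (-q) := by
      have := Real.add_one_le_exp (-q)
      rw [hrdef]; linarith
    have h3 : r ^ m ≤ Real.exp (-q) ^ m := pow_le_pow_left₀ hr0 h2 m
    have h4 : Real.exp (-q) ^ m = Real.exp (-1) := by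
      rw [← Real.exp_nat_mul]
      congr 1
      rw [hqdef]
      field_simp
    have h5 : Real.exp (-1) ≤ 1/2 := by
      rw [Real.exp_neg]
      have : (2:ℝ) ≤ Real.exp 1 := by
        have := Real.add_one_le_exp 1; linarith
      rw [inv_le_comm₀ (by positivity) (by norm_num)] at *
      · linarith [Real.exp_pos 1]
    linarith
  have hPhalf : 1/2 ≤ P := by rw [hP_eq]; linarith
  -- mean : ∑ p w * w = n * q
  have hmean : ∑ w ∈ Icc 1 n, p w * (w:ℝ) = (n:ℝ) * q := by
    rw [hIcc, Finset.sum_Ico_eq_sum_range]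
    simp only [Nat.add_sub_cancel]
    have hstep : ∀ k ∈ range n, p (1+k) * ((1+k : ℕ):ℝ)
        = (n:ℝ) * q * (((n-1).choose k : ℝ) * q ^ k * r ^ (n-1-k)) := by
      intro k hk
      have hkn : k < n := mem_range.1 hk
      have h := Nat.add_one_mul_choose_eq (n-1) k
      rw [show n - 1 + 1 = n by omega] at h
      have hcho : (n:ℝ) * ((n-1).choose k : ℝ) = (n.choose (k+1) : ℝ) * ((k:ℝ)+1) := by
        exact_mod_cast h
      have h1k : 1 + k = k + 1 := by omega
      rw [hpdef]
      simp only [h1k]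
      push_cast
      rw [show n - (k+1) = n - 1 - k by omega, pow_succ]
      linear_combination (-(q ^ k * q * r ^ (n-1-k))) * hcho
    rw [Finset.sum_congr rfl hstep, ← Finset.mul_sum]
    have : ∑ k ∈ range n, (((n-1).choose k : ℝ) * q ^ k * r ^ (n-1-k)) = 1 := by
      have h := htot (n-1)
      have : n - 1 + 1 = n := by omega
      rwa [this] at h
    rw [this, mul_one]
  -- Cauchy-Schwarz : P^2 ≤ (∑ p w * w) * (∑ p w / w)
  set S : ℝ := ∑ w ∈ Icc 1 n, p w / (w:ℝ) with hSdef
  have hCS : P ^ 2 ≤ ((n:ℝ) * q) * S := by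
    rw [← hmean, hSdef, hPdef]
    refine Finset.sum_sq_le_sum_mul_sum_of_sq_eq_mul _ ?_ ?_ ?_
    · intro i hi; exact mul_nonneg (hp0 i) (by positivity)
    · intro i hi; exact div_nonneg (hp0 i) (by positivity)
    · intro i hi
      have hi1 : 1 ≤ i := (mem_Icc.1 hi).1
      have hi0 : (0:ℝ) < i := by exact_mod_cast hi1
      field_simp
  have hS0 : 0 ≤ S := Finset.sum_nonneg fun i _ => div_nonneg (hp0 i) (by positivity)
  -- per-term lower bound
  have hterm : ∀ w ∈ Icc 1 n,
      p w * (τ * (1-τ) / (12 * (w:ℝ))) ≤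
      (n.choose w : ℝ) * (1 / (m : ℝ)) ^ w * (1 - 1 / (m : ℝ)) ^ (n - w) *
          ((⌈(w : ℝ) * τ⌉ : ℝ) * ((w : ℝ) + 1 - (⌈(w : ℝ) * τ⌉ : ℝ)) /
            (((w : ℝ) + 1) ^ 2 * ((w : ℝ) + 2))) := by
    intro w hw
    have hw1 : 1 ≤ w := (mem_Icc.1 hw).1
    have hw0 : (1:ℝ) ≤ (w:ℝ) := by exact_mod_cast hw1
    have hwpos : (0:ℝ) < w := by linarith
    set c : ℝ := (⌈(w : ℝ) * τ⌉ : ℝ) with hcdef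
    have hc1 : (w:ℝ) * τ ≤ c := Int.le_ceil _
    have hc2 : c < (w:ℝ) * τ + 1 := Int.ceil_lt_add_one _
    have hc0 : 0 < c := lt_of_lt_of_le (by positivity) hc1
    have hd1 : (w:ℝ) * (1 - τ) ≤ (w:ℝ) + 1 - c := by nlinarith
    have hFge : τ * (1-τ) / (12 * (w:ℝ)) ≤
        c * ((w:ℝ) + 1 - c) / (((w : ℝ) + 1) ^ 2 * ((w : ℝ) + 2)) := by
      have hnum : (w:ℝ)^2 * (τ * (1-τ)) ≤ c * ((w:ℝ) + 1 - c) := by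
        have h := mul_le_mul hc1 hd1 (mul_nonneg (by positivity) (by linarith)) hc0.le
        nlinarith [h]
      have hden : (((w : ℝ) + 1) ^ 2 * ((w : ℝ) + 2)) ≤ 12 * (w:ℝ)^3 := by
        nlinarith [sq_nonneg ((w:ℝ) - 1), sq_nonneg (w:ℝ), hw0]
      have heq : τ * (1-τ) / (12 * (w:ℝ)) = (w:ℝ)^2 * (τ * (1-τ)) / (12 * (w:ℝ)^3) := by
        rw [div_eq_div_iff (by positivity) (by positivity)]; ring
      rw [heq]
      have hcc : (0:ℝ) ≤ c * ((w:ℝ) + 1 - c) :=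
        mul_nonneg hc0.le (le_trans (mul_nonneg hwpos.le (by linarith)) hd1)
      exact div_le_div₀ hcc hnum (by positivity) hden
    calc p w * (τ * (1-τ) / (12 * (w:ℝ)))
        ≤ p w * (c * ((w:ℝ) + 1 - c) / (((w : ℝ) + 1) ^ 2 * ((w : ℝ) + 2))) :=
          mul_le_mul_of_nonneg_left hFge (hp0 w)
      _ = _ := by rw [hpdef]
  -- combine
  have hsum : ∑ w ∈ Icc 1 n, p w * (τ * (1-τ) / (12 * (w:ℝ))) ≤
      ∑ w ∈ Finset.Icc 1 n,
        (n.choose w : ℝ) * (1 / (m : ℝ)) ^ w * (1 - 1 / (m : ℝ)) ^ (n - w) *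
          ((⌈(w : ℝ) * τ⌉ : ℝ) * ((w : ℝ) + 1 - (⌈(w : ℝ) * τ⌉ : ℝ)) /
            (((w : ℝ) + 1) ^ 2 * ((w : ℝ) + 2))) :=
    Finset.sum_le_sum hterm
  have hrw : ∑ w ∈ Icc 1 n, p w * (τ * (1-τ) / (12 * (w:ℝ)))
      = τ * (1-τ) / 12 * S := by
    rw [hSdef, Finset.mul_sum]
    refine Finset.sum_congr rfl fun w hw => ?_
    have hw1 : 1 ≤ w := (mem_Icc.1 hw).1
    have hwpos : (0:ℝ) < w := by exact_mod_cast hw1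
    field_simp
  -- S ≥ P^2 * m / n
  have hnq : (0:ℝ) < (n:ℝ) * q := by positivity
  have hSge : P^2 / ((n:ℝ) * q) ≤ S := by
    rw [div_le_iff₀ hnq]; linarith [hCS]
  have hfin : (m : ℝ) / (n : ℝ) * τ * (1 - τ) / 200 ≤ τ * (1-τ) / 12 * S := by
    have h1 : (1:ℝ)/4 ≤ P^2 := by nlinarith
    have h2 : P^2 / ((n:ℝ) * q) = P^2 * (m:ℝ) / (n:ℝ) := by
      rw [hqdef]; field_simp
    have h3 : (1:ℝ)/4 * ((m:ℝ)/(n:ℝ)) ≤ S := by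
      have : (1:ℝ)/4 * ((m:ℝ)/(n:ℝ)) ≤ P^2 * (m:ℝ) / (n:ℝ) := by
        rw [mul_div_assoc]
        exact mul_le_mul_of_nonneg_right h1 (by positivity)
      calc (1:ℝ)/4 * ((m:ℝ)/(n:ℝ)) ≤ P^2 * (m:ℝ) / (n:ℝ) := this
        _ = P^2 / ((n:ℝ) * q) := h2.symm
        _ ≤ S := hSge
    have hτn : (0:ℝ) < τ * (1-τ) := by nlinarith
    have hmn' : (0:ℝ) < (m:ℝ)/(n:ℝ) := by positivity
    nlinarith [mul_le_mul_of_nonneg_left h3 (le_of_lt hτn)]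
  calc (m : ℝ) / (n : ℝ) * τ * (1 - τ) / 200 ≤ τ * (1-τ) / 12 * S := hfin
    _ = ∑ w ∈ Icc 1 n, p w * (τ * (1-τ) / (12 * (w:ℝ))) := hrw.symm
    _ ≤ _ := hsum
end

section
/- For every natural number w ≥ 1 and every τ ∈ (0,1), one has τ·(1−τ)/(4·(w+2)) ≤ ⌈wτ⌉·(w+1−⌈wτ⌉)/((w+1)²·(w+2)) ≤ 1/(w+2). -/
/-!
Write `c = ⌈wτ⌉`, so that `wτ ≤ c ≤ wτ + 1`. The parabola `x ↦ x (w + 1 - x)` is concave, so on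
`[wτ, wτ + 1]` it is smallest at an endpoint. The endpoint values exceed `τ (1 - τ) w (w + 1)`
by `wτ²` and `w (1 - τ)²`, and `4w ≥ w + 1` turns this into `τ (1 - τ) (w + 1)² / 4`. The upper bound is
AM-GM: `c (w + 1 - c) ≤ (w + 1)² / 4`.
-/

lemma min_le_mul_sub_of_mem_Icc {a b x n : ℝ} (hx : x ∈ Set.Icc a b) :
    min (a * (n - a)) (b * (n - b)) ≤ x * (n - x) := by
  obtain ⟨hax, hxb⟩ := hx
  rcases le_total (x + a) n with h | h
  · exact min_le_of_left_le (by nlinarith)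
  · exact min_le_of_right_le (by nlinarith)

lemma mul_one_sub_mul_le_mul_sub_of_mem_Icc {w τ c : ℝ} (hw : 0 ≤ w)
    (hc : c ∈ Set.Icc (w * τ) (w * τ + 1)) :
    τ * (1 - τ) * (w * (w + 1)) ≤ c * (w + 1 - c) := by
  have hleft : τ * (1 - τ) * (w * (w + 1)) ≤ w * τ * (w + 1 - w * τ) := by
    nlinarith [mul_nonneg hw (sq_nonneg τ)]
  have hright : τ * (1 - τ) * (w * (w + 1)) ≤ (w * τ + 1) * (w + 1 - (w * τ + 1)) := by
    nlinarith [mul_nonneg hw (sq_nonneg (1 - τ))]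
  exact (le_min hleft hright).trans (min_le_mul_sub_of_mem_Icc hc)

lemma ceil_mem_Icc_add_one (x : ℝ) : (⌈x⌉ : ℝ) ∈ Set.Icc x (x + 1) :=
  ⟨Int.le_ceil x, (Int.ceil_lt_add_one x).le⟩

theorem stmt2 (w : ℕ) (hw : 1 ≤ w) (τ : ℝ) (hτ0 : 0 < τ) (hτ1 : τ < 1) :
    τ * (1 - τ) / (4 * ((w : ℝ) + 2)) ≤
      (⌈(w : ℝ) * τ⌉ : ℝ) * ((w : ℝ) + 1 - (⌈(w : ℝ) * τ⌉ : ℝ)) /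
        (((w : ℝ) + 1) ^ 2 * ((w : ℝ) + 2)) ∧
    (⌈(w : ℝ) * τ⌉ : ℝ) * ((w : ℝ) + 1 - (⌈(w : ℝ) * τ⌉ : ℝ)) /
        (((w : ℝ) + 1) ^ 2 * ((w : ℝ) + 2)) ≤ 1 / ((w : ℝ) + 2) := by
  set c : ℝ := (⌈(w : ℝ) * τ⌉ : ℝ)
  have hw1 : (1 : ℝ) ≤ w := by exact_mod_cast hw
  have hsq : (0 : ℝ) < ((w : ℝ) + 1) ^ 2 := by positivity
  have hvar : τ * (1 - τ) * ((w : ℝ) * (w + 1)) ≤ c * ((w : ℝ) + 1 - c) :=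
    mul_one_sub_mul_le_mul_sub_of_mem_Icc (by positivity) (ceil_mem_Icc_add_one _)
  have hlower : τ * (1 - τ) / 4 ≤ c * ((w : ℝ) + 1 - c) / ((w : ℝ) + 1) ^ 2 := by
    rw [le_div_iff₀ hsq]
    have hw3 : 0 ≤ ((w : ℝ) + 1) * (3 * w - 1) := by nlinarith
    nlinarith [mul_nonneg (mul_pos hτ0 (sub_pos.2 hτ1)).le hw3]
  have hupper : c * ((w : ℝ) + 1 - c) / ((w : ℝ) + 1) ^ 2 ≤ 1 := by
    rw [div_le_one hsq]
    nlinarith [four_mul_le_sq_add c ((w : ℝ) + 1 - c)]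
  simp only [div_mul_eq_div_div]
  exact ⟨by gcongr, by gcongr⟩
end

section
/- For every natural number q there exists a constant C_q > 1, depending only on q, with the following property: for every real polynomial p of degree at most q, all reals a < b, every α ∈ [0,1), and every integer J ≥ 2, | ∫_a^b p(x)² dx − ((b−a)/J)·∑_{j ∈ ℕ, j+α ≤ J} p(a + ((j+α)/J)·(b−a))² | ≤ (C_q/(J−1))·∫_a^b p(x)² dx. -/
/-!
Rescaling `[a, b]` to `[0, 1]` replaces `p` by a polynomial `g` of the same degree bound. On
`[0, 1]` the function `g²` is Lipschitz with constant `2 q ‖g‖₁²`, where `‖g‖₁` is the sum of the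
absolute values of the coefficients, so each of the `J` cells contributes an error of order
`‖g‖₁² / J²`; the possible extra sample at the right endpoint costs at most `‖g‖₁² / J`. Finally,
on the finite-dimensional space of polynomials of degree at most `q` the positive definite
quadratic form `∫₀¹ g²` dominates `‖g‖₁²` up to a constant, by compactness of the unit sphere.
-/

open Finset intervalIntegral Polynomial Set
open scoped NNReal

theorem exists_pos_mul_norm_sq_le_of_sq_homogeneous {E : Type*} [NormedAddCommGroup E]
    [NormedSpace ℝ E] [FiniteDimensional ℝ E] [Nontrivial E] {Φ : E → ℝ} (hΦ : Continuous Φ)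
    (hsmul : ∀ (t : ℝ) (x : E), Φ (t • x) = t ^ 2 * Φ x) (hpos : ∀ x ≠ 0, 0 < Φ x) :
    ∃ m > 0, ∀ x, m * ‖x‖ ^ 2 ≤ Φ x := by
  obtain ⟨x₀, hx₀, hmin⟩ := (isCompact_sphere (0 : E) 1).exists_isMinOn
    (NormedSpace.sphere_nonempty.mpr zero_le_one) hΦ.continuousOn
  refine ⟨Φ x₀, hpos x₀ (ne_zero_of_mem_unit_sphere ⟨x₀, hx₀⟩), fun x => ?_⟩
  rcases eq_or_ne x 0 with rfl | hx
  · simpa using (hsmul 0 0).ge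
  have hnx : ‖x‖ ≠ 0 := norm_ne_zero_iff.mpr hx
  have hunit : ‖x‖⁻¹ • x ∈ Metric.sphere (0 : E) 1 := by
    rw [mem_sphere_zero_iff_norm, norm_smul, norm_inv, norm_norm, inv_mul_cancel₀ hnx]
  calc Φ x₀ * ‖x‖ ^ 2 ≤ Φ (‖x‖⁻¹ • x) * ‖x‖ ^ 2 := by gcongr; exact hmin hunit
    _ = Φ x := by
      rw [hsmul, mul_comm, ← mul_assoc, ← mul_pow, mul_inv_cancel₀ hnx, one_pow, one_mul]

theorem integral_eq_sub_mul_integral_unitInterval (f : ℝ → ℝ) (a b : ℝ) :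
    ∫ x in a..b, f x = (b - a) * ∫ t in (0 : ℝ)..1, f (a + t * (b - a)) := by
  rcases eq_or_ne b a with rfl | hab
  · simp
  simp only [mul_comm _ (b - a), integral_comp_add_mul f (sub_ne_zero.mpr hab), smul_eq_mul,
    mul_zero, mul_one, add_zero, add_sub_cancel]
  rw [mul_inv_cancel_left₀ (sub_ne_zero.mpr hab)]

theorem abs_integral_sub_mul_le_of_lipschitzOnWith {f : ℝ → ℝ} {K : ℝ≥0} {u v s : ℝ}
    (hf : LipschitzOnWith K f (Icc u v)) (hs : s ∈ Icc u v) :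
    |(∫ t in u..v, f t) - (v - u) * f s| ≤ K * (v - u) ^ 2 := by
  have huv : u ≤ v := hs.1.trans hs.2
  have hint : IntervalIntegrable f MeasureTheory.volume u v :=
    hf.continuousOn.intervalIntegrable_of_Icc huv
  calc |(∫ t in u..v, f t) - (v - u) * f s| = |∫ t in u..v, (f t - f s)| := by
        rw [integral_sub hint intervalIntegrable_const, integral_const, smul_eq_mul]
    _ ≤ ∫ t in u..v, |f t - f s| := abs_integral_le_integral_abs huv
    _ ≤ ∫ _ in u..v, (K * (v - u) : ℝ) := by
        refine integral_mono_on huv (hint.sub intervalIntegrable_const).abs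
          intervalIntegrable_const fun t ht => ?_
        rw [← Real.dist_eq]
        exact (hf.dist_le_mul t ht s hs).trans (by gcongr; exact Real.dist_le_of_mem_Icc ht hs)
    _ = K * (v - u) ^ 2 := by rw [integral_const, smul_eq_mul]; ring

theorem abs_integral_sub_riemannSum_le {f : ℝ → ℝ} {K : ℝ≥0}
    (hf : LipschitzOnWith K f (Icc 0 1)) {α : ℝ} (hα0 : 0 ≤ α) (hα1 : α ≤ 1) {J : ℕ}
    (hJ : 0 < J) :
    |(∫ t in (0 : ℝ)..1, f t) - 1 / J * ∑ j ∈ range J, f ((j + α) / J)| ≤ K / J := by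
  have hJ' : (0 : ℝ) < J := by exact_mod_cast hJ
  have hcell_sub : ∀ j < J, Icc ((j : ℝ) / J) ((j + 1 : ℕ) / J) ⊆ Icc 0 1 := fun j hj =>
    Icc_subset_Icc (by positivity) (div_le_one_of_le₀ (by exact_mod_cast hj) hJ'.le)
  have hcell : ∀ j ∈ range J,
      |(∫ t in (j / J : ℝ)..((j + 1 : ℕ) / J : ℝ), f t) - 1 / J * f ((j + α) / J)| ≤
        K / J ^ 2 := by
    intro j hj
    have h := abs_integral_sub_mul_le_of_lipschitzOnWith
      (hf.mono (hcell_sub j (mem_range.mp hj))) (s := (j + α) / J)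
      ⟨by gcongr; linarith, by push_cast; gcongr⟩
    have hwidth : ((j + 1 : ℕ) / J - j / J : ℝ) = 1 / J := by push_cast; ring
    rwa [hwidth, div_pow, one_pow, mul_one_div] at h
  have hsplit := sum_integral_adjacent_intervals (μ := MeasureTheory.volume) fun k hk =>
    (hf.mono (hcell_sub k hk)).continuousOn.intervalIntegrable_of_Icc
      (by gcongr; linarith)
  rw [Nat.cast_zero, zero_div, div_self hJ'.ne'] at hsplit
  rw [← hsplit, mul_sum, ← sum_sub_distrib]
  calc _ ≤ ∑ _j ∈ range J, (K / J ^ 2 : ℝ) := (abs_sum_le_sum_abs _ _).trans (sum_le_sum hcell)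
    _ = K / J := by rw [sum_const, card_range, nsmul_eq_mul]; field_simp

theorem sum_filter_range_succ_add_le {M : Type*} [AddCommMonoid M] (f : ℕ → M) {α : ℝ}
    (hα : α ≤ 1) (J : ℕ) :
    ∑ j ∈ (range (J + 1)).filter (fun j : ℕ => (j : ℝ) + α ≤ J), f j =
      ∑ j ∈ range J, f j + if α ≤ 0 then f J else 0 := by
  have hlt : ∀ j ∈ range J, (j : ℝ) + α ≤ J := fun j hj => by
    have : (j : ℝ) + 1 ≤ J := by exact_mod_cast mem_range.mp hj
    linarith
  rw [range_add_one, filter_insert, filter_true_of_mem hlt]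
  by_cases h : α ≤ 0
  · rw [if_pos (by linarith), if_pos h, sum_insert notMem_range_self, add_comm]
  · rw [if_neg (by linarith), if_neg h, add_zero]

namespace Polynomial

noncomputable def l1Norm (p : ℝ[X]) : ℝ := p.sum fun _ a => |a|

theorem l1Norm_nonneg (p : ℝ[X]) : 0 ≤ p.l1Norm :=
  Finset.sum_nonneg fun _ _ => abs_nonneg _

theorem abs_eval_le_l1Norm (p : ℝ[X]) {t : ℝ} (ht : |t| ≤ 1) : |p.eval t| ≤ p.l1Norm := by
  rw [eval_eq_sum, Polynomial.sum]
  refine (abs_sum_le_sum_abs _ _).trans (sum_le_sum fun n _ => ?_)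
  rw [abs_mul, abs_pow]
  exact mul_le_of_le_one_right (abs_nonneg _) (pow_le_one₀ (abs_nonneg t) ht)

theorem abs_eval_sub_eval_le (p : ℝ[X]) {x y : ℝ} (hx : |x| ≤ 1) (hy : |y| ≤ 1) :
    |p.eval x - p.eval y| ≤ p.natDegree * p.l1Norm * |x - y| := by
  rw [eval_eq_sum, eval_eq_sum, Polynomial.sum, Polynomial.sum, ← sum_sub_distrib, l1Norm,
    Polynomial.sum, mul_sum, sum_mul]
  refine (abs_sum_le_sum_abs _ _).trans (sum_le_sum fun n hn => ?_)
  have hpow : |x ^ n - y ^ n| ≤ p.natDegree * |x - y| := calc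
    |x ^ n - y ^ n| ≤ |x - y| * n * max |x| |y| ^ (n - 1) := abs_pow_sub_pow_le ..
    _ ≤ |x - y| * p.natDegree * 1 := by
      gcongr
      · exact le_natDegree_of_mem_supp n hn
      · exact pow_le_one₀ (le_max_of_le_left (abs_nonneg x)) (max_le hx hy)
    _ = _ := by ring
  rw [← mul_sub, abs_mul]
  calc |p.coeff n| * |x ^ n - y ^ n| ≤ |p.coeff n| * (p.natDegree * |x - y|) := by gcongr
    _ = _ := by ring

theorem lipschitzOnWith_eval_sq (p : ℝ[X]) :
    LipschitzOnWith
      (⟨2 * p.natDegree * p.l1Norm ^ 2, by have := p.l1Norm_nonneg; positivity⟩ : ℝ≥0)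
      (fun t => p.eval t ^ 2) (Icc (-1) 1) := by
  refine LipschitzOnWith.of_dist_le_mul fun x hx y hy => ?_
  change |_| ≤ 2 * p.natDegree * p.l1Norm ^ 2 * |x - y|
  have hx' : |x| ≤ 1 := abs_le.mpr hx
  have hy' : |y| ≤ 1 := abs_le.mpr hy
  have hsum : |p.eval x + p.eval y| ≤ 2 * p.l1Norm := by
    linarith [abs_add_le (p.eval x) (p.eval y), p.abs_eval_le_l1Norm hx',
      p.abs_eval_le_l1Norm hy']
  calc |p.eval x ^ 2 - p.eval y ^ 2| = |p.eval x + p.eval y| * |p.eval x - p.eval y| := by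
        rw [← abs_mul]; congr 1; ring
    _ ≤ 2 * p.l1Norm * (p.natDegree * p.l1Norm * |x - y|) := by
        gcongr
        · linarith [p.l1Norm_nonneg]
        · exact p.abs_eval_sub_eval_le hx' hy'
    _ = _ := by ring

theorem integral_eval_sq_pos {p : ℝ[X]} (hp : p ≠ 0) {a b : ℝ} (hab : a < b) :
    0 < ∫ x in a..b, p.eval x ^ 2 := by
  obtain ⟨x, hxab, hx⟩ := ((Icc_infinite hab).sdiff (finite_setOfPred_isRoot hp)).nonempty
  exact integral_pos hab (p.continuous.pow 2).continuousOn (fun _ _ => sq_nonneg _)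
    ⟨x, hxab, pow_two_pos_of_ne_zero hx⟩

theorem exists_pos_mul_l1Norm_sq_le_integral (q : ℕ) :
    ∃ m > 0, ∀ p : ℝ[X], p.natDegree ≤ q →
      m * p.l1Norm ^ 2 ≤ ∫ t in (0 : ℝ)..1, p.eval t ^ 2 := by
  -- Coefficient vectors carry the `ℓ¹` norm, so that `‖c‖` is exactly the `l1Norm` of `P c`.
  let P : PiLp 1 (fun _ : Fin (q + 1) => ℝ) →ₗ[ℝ] ℝ[X] :=
    (degreeLT ℝ (q + 1)).subtype ∘ₗ (degreeLTEquiv ℝ (q + 1)).symm.toLinearMap ∘ₗ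
      (WithLp.linearEquiv 1 ℝ _).toLinearMap
  have hP : Function.Injective P := by
    simp only [P, LinearMap.coe_comp, LinearEquiv.coe_coe]
    exact Subtype.val_injective.comp ((LinearEquiv.injective _).comp (LinearEquiv.injective _))
  have heval : ∀ c t, (P c).eval t = ∑ i, c i * t ^ (i : ℕ) := fun c t => by
    change eval t (∑ i : Fin (q + 1), monomial (i : ℕ) (c i)) = _
    simp [eval_finsetSum]
  obtain ⟨m, hm, hle⟩ := exists_pos_mul_norm_sq_le_of_sq_homogeneous
    (Φ := fun c => ∫ t in (0 : ℝ)..1, (P c).eval t ^ 2)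
    (continuous_parametric_intervalIntegral_of_continuous' (by simp only [heval]; fun_prop) _ _)
    (fun s c => by simp only [map_smul, eval_smul, smul_eq_mul, mul_pow, integral_const_mul])
    (fun c hc => integral_eval_sq_pos ((map_ne_zero_iff P hP).mpr hc) one_pos)
  refine ⟨m, hm, fun p hp => ?_⟩
  have hdeg : p.degree < ↑(q + 1) :=
    (degree_le_of_natDegree_le hp).trans_lt (by exact_mod_cast q.lt_succ_self)
  let c : PiLp 1 (fun _ : Fin (q + 1) => ℝ) :=
    WithLp.toLp 1 (degreeLTEquiv ℝ (q + 1) ⟨p, mem_degreeLT.mpr hdeg⟩)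
  have hPc : P c = p := by simp [P, c]
  have hc : ‖c‖ = p.l1Norm := by
    rw [PiLp.norm_eq_of_L1, l1Norm, ← sum_fin _ (fun _ => abs_zero) hdeg]
    rfl
  simpa only [hPc, hc] using hle c

theorem abs_integral_sq_sub_riemannSum_le (p : ℝ[X]) {α : ℝ} (hα0 : 0 ≤ α) (hα1 : α < 1)
    {J : ℕ} (hJ : 0 < J) :
    |(∫ t in (0 : ℝ)..1, p.eval t ^ 2) -
        1 / J * ∑ j ∈ (range (J + 1)).filter (fun j : ℕ => (j : ℝ) + α ≤ J),
          p.eval ((j + α) / J) ^ 2| ≤ (2 * p.natDegree + 1) * p.l1Norm ^ 2 / J := by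
  have hinterior := abs_integral_sub_riemannSum_le
    (p.lipschitzOnWith_eval_sq.mono (Icc_subset_Icc (by norm_num) le_rfl)) hα0 hα1.le hJ
  have hendpoint : |1 / (J : ℝ) * if α ≤ 0 then p.eval ((J + α) / J) ^ 2 else 0| ≤
      p.l1Norm ^ 2 / J := by
    rw [abs_mul, abs_of_pos (by positivity), one_div_mul_eq_div]
    gcongr
    split_ifs with hα
    · rw [abs_pow, show α = 0 by linarith, add_zero, div_self (by positivity)]
      gcongr
      exact p.abs_eval_le_l1Norm (by norm_num)
    · simpa using sq_nonneg p.l1Norm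
  rw [sum_filter_range_succ_add_le _ hα1.le, mul_add, ← sub_sub]
  calc _ ≤ _ := abs_sub _ _
    _ ≤ 2 * p.natDegree * p.l1Norm ^ 2 / J + p.l1Norm ^ 2 / J := add_le_add hinterior hendpoint
    _ = _ := by ring

theorem exists_abs_integral_sq_sub_riemannSum_le (q : ℕ) :
    ∃ K > 0, ∀ p : ℝ[X], p.natDegree ≤ q → ∀ α : ℝ, 0 ≤ α → α < 1 → ∀ J : ℕ, 0 < J →
      |(∫ t in (0 : ℝ)..1, p.eval t ^ 2) -
          1 / J * ∑ j ∈ (range (J + 1)).filter (fun j : ℕ => (j : ℝ) + α ≤ J),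
            p.eval ((j + α) / J) ^ 2| ≤ K * (∫ t in (0 : ℝ)..1, p.eval t ^ 2) / J := by
  obtain ⟨m, hm, hcoercive⟩ := exists_pos_mul_l1Norm_sq_le_integral q
  refine ⟨(2 * q + 1) / m, by positivity, fun p hp α hα0 hα1 J hJ => ?_⟩
  refine (p.abs_integral_sq_sub_riemannSum_le hα0 hα1 hJ).trans ?_
  gcongr ?_ / _
  calc _ ≤ (2 * q + 1) * p.l1Norm ^ 2 := by gcongr
    _ = (2 * q + 1) / m * (m * p.l1Norm ^ 2) := by field_simp
    _ ≤ _ := by gcongr; exact hcoercive p hp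

end Polynomial

theorem stmt6 (q : ℕ) :
    ∃ C : ℝ, 1 < C ∧
      ∀ p : Polynomial ℝ, p.natDegree ≤ q →
      ∀ a b : ℝ, a < b →
      ∀ α : ℝ, 0 ≤ α → α < 1 →
      ∀ J : ℕ, 2 ≤ J →
        |(∫ x in a..b, (p.eval x) ^ 2) -
            (b - a) / (J : ℝ) *
              ∑ j ∈ (Finset.range (J + 1)).filter (fun j : ℕ => (j : ℝ) + α ≤ (J : ℝ)),
                (p.eval (a + (((j : ℝ) + α) / (J : ℝ)) * (b - a))) ^ 2|
          ≤ C / ((J : ℝ) - 1) * ∫ x in a..b, (p.eval x) ^ 2 := by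
  obtain ⟨K, hK, hriemann⟩ := exists_abs_integral_sq_sub_riemannSum_le q
  refine ⟨K + 1, by linarith, fun p hp a b hab α hα0 hα1 J hJ => ?_⟩
  set g := p.comp (C a + X * C (b - a))
  have hg : g.natDegree ≤ q := natDegree_comp_le.trans <| by
    rw [natDegree_C_add, natDegree_mul_C (sub_ne_zero.mpr hab.ne'), natDegree_X, mul_one]
    exact hp
  have hgeval : ∀ t, g.eval t = p.eval (a + t * (b - a)) := fun t => by simp [g]
  have hJ1 : (0 : ℝ) < J - 1 := by
    have : (2 : ℝ) ≤ J := by exact_mod_cast hJ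
    linarith
  have hI : 0 ≤ ∫ t in (0 : ℝ)..1, g.eval t ^ 2 :=
    integral_nonneg zero_le_one fun _ _ => sq_nonneg _
  rw [integral_eq_sub_mul_integral_unitInterval _ a b]
  simp_rw [← hgeval, ← mul_one_div (b - a) (J : ℝ), mul_assoc, ← mul_sub, abs_mul,
    abs_of_pos (sub_pos.mpr hab)]
  calc _ ≤ (b - a) * (K * (∫ t in (0 : ℝ)..1, g.eval t ^ 2) / J) := by
        gcongr; exact hriemann g hg α hα0 hα1 J (by omega)
    _ ≤ (b - a) * ((K + 1) * (∫ t in (0 : ℝ)..1, g.eval t ^ 2) / (J - 1)) := by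
        gcongr <;> linarith
    _ = _ := by ring
end

section
/- Under the stated assumptions, ‖ E[ Z · (G(·, ⟨Z, β⟩) − τ) ] ‖ ≤ (f̄′/2) · c² · ξ, where the norm is the Euclidean norm on ℝ^m. -/
open MeasureTheory Filter intervalIntegral

lemma taylor2_bound {G Gy Gyy : ℝ → ℝ} (hG : ∀ y, HasDerivAt G (Gy y) y)
    (hGy : ∀ y, HasDerivAt Gy (Gyy y) y) {M : ℝ} (hM : ∀ y, |Gyy y| ≤ M)
    (q b : ℝ) : |G b - G q - Gy q * (b - q)| ≤ M / 2 * (b - q) ^ 2 := by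
  have hGycont : Continuous Gy :=
    continuous_iff_continuousAt.2 fun y => (hGy y).continuousAt
  have hlip : ∀ y z : ℝ, |Gy y - Gy z| ≤ M * |y - z| := by
    intro y z
    have := Convex.norm_image_sub_le_of_norm_hasDerivWithin_le
      (f := Gy) (f' := Gyy) (s := Set.univ) (C := M)
      (fun x _ => (hGy x).hasDerivWithinAt)
      (fun x _ => by simpa [Real.norm_eq_abs] using hM x)
      convex_univ (Set.mem_univ z) (Set.mem_univ y)
    simpa [Real.norm_eq_abs] using this
  have hftc : G b - G q = ∫ y in q..b, Gy y :=
    (intervalIntegral.integral_eq_sub_of_hasDerivAt (fun y _ => hG y)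
      (hGycont.intervalIntegrable q b)).symm
  have hconst : Gy q * (b - q) = ∫ y in q..b, Gy q := by
    simp [intervalIntegral.integral_const, smul_eq_mul]; ring
  have hdiff : G b - G q - Gy q * (b - q) = ∫ y in q..b, (Gy y - Gy q) := by
    rw [hftc, hconst, ← intervalIntegral.integral_sub (hGycont.intervalIntegrable q b)
      (intervalIntegrable_const)]
  rw [hdiff]
  rcases le_total q b with h | h
  · calc |∫ y in q..b, (Gy y - Gy q)| ≤ ∫ y in q..b, |Gy y - Gy q| := by
          simpa [Real.norm_eq_abs] using
            intervalIntegral.norm_integral_le_integral_norm (f := fun y => Gy y - Gy q) h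
      _ ≤ ∫ y in q..b, M * (y - q) := by
          apply intervalIntegral.integral_mono_on h
          · exact ((hGycont.sub continuous_const).abs).intervalIntegrable q b
          · exact (continuous_const.mul (continuous_id.sub continuous_const)).intervalIntegrable q b
          · intro y hy
            have := hlip y q
            rwa [abs_of_nonneg (sub_nonneg.2 hy.1)] at this
      _ = M / 2 * (b - q) ^ 2 := by
          rw [intervalIntegral.integral_const_mul,
            intervalIntegral.integral_sub intervalIntegrable_id intervalIntegrable_const,
            integral_id, intervalIntegral.integral_const, smul_eq_mul]
          ring
  · rw [intervalIntegral.integral_symm, abs_neg]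
    calc |∫ y in b..q, (Gy y - Gy q)| ≤ ∫ y in b..q, |Gy y - Gy q| := by
          simpa [Real.norm_eq_abs] using
            intervalIntegral.norm_integral_le_integral_norm (f := fun y => Gy y - Gy q) h
      _ ≤ ∫ y in b..q, M * (q - y) := by
          apply intervalIntegral.integral_mono_on h
          · exact ((hGycont.sub continuous_const).abs).intervalIntegrable b q
          · exact (continuous_const.mul (continuous_const.sub continuous_id)).intervalIntegrable b q
          · intro y hy
            have h2 := hlip y q
            rwa [abs_sub_comm y q, abs_of_nonneg (sub_nonneg.2 hy.2)] at h2
      _ = M / 2 * (b - q) ^ 2 := by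
          rw [intervalIntegral.integral_const_mul,
            intervalIntegral.integral_sub intervalIntegrable_const intervalIntegrable_id,
            integral_id, intervalIntegral.integral_const, smul_eq_mul]
          ring


lemma deriv_meas {Ω : Type*} [MeasurableSpace Ω] {G Gy : Ω → ℝ → ℝ}
    (hGmeas : Measurable fun p : Ω × ℝ => G p.1 p.2)
    (hGderiv : ∀ ω y, HasDerivAt (G ω) (Gy ω y) y)
    {Q : Ω → ℝ} (hQ : Measurable Q) :
    Measurable fun ω => Gy ω (Q ω) := by
  have hmeasn : ∀ n : ℕ, Measurable fun ω =>
      (G ω (Q ω + 1 / (n + 1)) - G ω (Q ω)) / (1 / ((n : ℝ) + 1)) := by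
    intro n
    exact ((hGmeas.comp (measurable_id.prodMk (hQ.add_const _))).sub
      (hGmeas.comp (measurable_id.prodMk hQ))).div_const _
  apply measurable_of_tendsto_metrizable hmeasn
  rw [tendsto_pi_nhds]
  intro ω
  have hslope : Tendsto (slope (G ω) (Q ω)) (nhdsWithin (Q ω) {Q ω}ᶜ) (nhds (Gy ω (Q ω))) :=
    hasDerivAt_iff_tendsto_slope.1 (hGderiv ω (Q ω))
  have hseq : Tendsto (fun n : ℕ => Q ω + 1 / ((n : ℝ) + 1)) atTop
      (nhdsWithin (Q ω) {Q ω}ᶜ) := by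
    apply tendsto_nhdsWithin_of_tendsto_nhds_of_eventually_within
    · simpa using (tendsto_const_nhds (x := Q ω)).add tendsto_one_div_add_atTop_nhds_zero_nat
    · filter_upwards with n
      have : (0 : ℝ) < 1 / ((n : ℝ) + 1) := by positivity
      simp only [Set.mem_compl_iff, Set.mem_singleton_iff]
      nlinarith
  have := hslope.comp hseq
  convert this using 2 with n
  simp [slope_def_field]

theorem stmt9 {Ω : Type*} [MeasurableSpace Ω] (P : Measure Ω) [IsProbabilityMeasure P]
    {m : ℕ} (Z : Ω → EuclideanSpace ℝ (Fin m)) (hZ : Measurable Z)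
    (ξ : ℝ) (hξ : ∀ ω, ‖Z ω‖ ≤ ξ)
    (G Gy Gyy : Ω → ℝ → ℝ)
    (hGmeas : Measurable fun p : Ω × ℝ => G p.1 p.2)
    (hG01 : ∀ ω y, G ω y ∈ Set.Icc (0 : ℝ) 1)
    (hGderiv : ∀ ω y, HasDerivAt (G ω) (Gy ω y) y)
    (hGyderiv : ∀ ω y, HasDerivAt (Gy ω) (Gyy ω y) y)
    (fbar fbar' : ℝ)
    (hGybd : ∀ ω y, |Gy ω y| ≤ fbar)
    (hGyybd : ∀ ω y, |Gyy ω y| ≤ fbar')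
    (τ : ℝ) (hτ : τ ∈ Set.Icc (0 : ℝ) 1)
    (Q : Ω → ℝ) (hQ : Measurable Q)
    (hQτ : ∀ᵐ ω ∂P, G ω (Q ω) = τ)
    (c : ℝ) (β : EuclideanSpace ℝ (Fin m))
    (hfoc : (∫ ω, (Gy ω (Q ω) * ((inner ℝ (Z ω) β : ℝ) - Q ω)) • Z ω ∂P) = 0)
    (happrox : ∀ ω, |(inner ℝ (Z ω) β : ℝ) - Q ω| ≤ c) :
    ‖∫ ω, (G ω (inner ℝ (Z ω) β : ℝ) - τ) • Z ω ∂P‖ ≤ fbar' / 2 * c ^ 2 * ξ := by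
  have hne : Nonempty Ω := by
    by_contra h
    have h1 : P Set.univ = 1 := measure_univ
    rw [Set.univ_eq_empty_iff.2 (not_nonempty_iff.1 h)] at h1
    simp at h1
  obtain ⟨ω₀⟩ := hne
  have hξ0 : 0 ≤ ξ := (norm_nonneg _).trans (hξ ω₀)
  have hc0 : 0 ≤ c := (abs_nonneg _).trans (happrox ω₀)
  have hf'0 : 0 ≤ fbar' := (abs_nonneg _).trans (hGyybd ω₀ 0)
  set b : Ω → ℝ := fun ω => (inner ℝ (Z ω) β : ℝ) with hb
  have hbmeas : Measurable b := hZ.inner measurable_const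
  have hGbmeas : Measurable fun ω => G ω (b ω) :=
    hGmeas.comp (measurable_id.prodMk hbmeas)
  have hGymeas : Measurable fun ω => Gy ω (Q ω) := deriv_meas hGmeas hGderiv hQ
  set f0 : Ω → EuclideanSpace ℝ (Fin m) := fun ω => (G ω (b ω) - τ) • Z ω with hf0
  set f1 : Ω → EuclideanSpace ℝ (Fin m) :=
    fun ω => (Gy ω (Q ω) * (b ω - Q ω)) • Z ω with hf1
  set D : Ω → ℝ := fun ω => G ω (b ω) - τ - Gy ω (Q ω) * (b ω - Q ω) with hD
  have hf0meas : Measurable f0 := ((hGbmeas.sub measurable_const).smul hZ)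
  have hf1meas : Measurable f1 := ((hGymeas.mul (hbmeas.sub hQ)).smul hZ)
  have hf0int : Integrable f0 P := by
    apply Integrable.mono' (integrable_const (2 * ξ)) hf0meas.aestronglyMeasurable
    filter_upwards with ω
    have h1 : |G ω (b ω) - τ| ≤ 2 := by
      have := hG01 ω (b ω)
      rw [Set.mem_Icc] at this hτ
      rw [abs_le]; constructor <;> linarith [this.1, this.2, hτ.1, hτ.2]
    calc ‖f0 ω‖ = |G ω (b ω) - τ| * ‖Z ω‖ := by
          rw [hf0, norm_smul, Real.norm_eq_abs]
      _ ≤ 2 * ξ := mul_le_mul h1 (hξ ω) (norm_nonneg _) (by norm_num)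
  have hf1int : Integrable f1 P := by
    apply Integrable.mono' (integrable_const (fbar * c * ξ)) hf1meas.aestronglyMeasurable
    filter_upwards with ω
    have h1 : |Gy ω (Q ω) * (b ω - Q ω)| ≤ fbar * c := by
      rw [abs_mul]
      exact mul_le_mul (hGybd ω (Q ω)) (happrox ω) (abs_nonneg _)
        ((abs_nonneg _).trans (hGybd ω 0))
    calc ‖f1 ω‖ = |Gy ω (Q ω) * (b ω - Q ω)| * ‖Z ω‖ := by
          rw [hf1, norm_smul, Real.norm_eq_abs]
      _ ≤ fbar * c * ξ := mul_le_mul h1 (hξ ω) (norm_nonneg _)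
          (mul_nonneg ((abs_nonneg _).trans (hGybd ω₀ 0)) hc0)
  have hf2int : Integrable (fun ω => D ω • Z ω) P := by
    have : (fun ω => D ω • Z ω) = f0 - f1 := by
      funext ω
      simp only [hD, hf0, hf1, Pi.sub_apply, sub_smul]
    rw [this]; exact hf0int.sub hf1int
  have hsplit : (∫ ω, f0 ω ∂P) = (∫ ω, f1 ω ∂P) + ∫ ω, D ω • Z ω ∂P := by
    rw [← integral_add hf1int hf2int]
    congr 1; funext ω
    simp only [hD, hf0, hf1, sub_smul]
    abel
  rw [hf0] at hsplit ⊢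
  rw [hsplit, hfoc, zero_add]
  have hbound : ∀ᵐ ω ∂P, ‖D ω • Z ω‖ ≤ fbar' / 2 * c ^ 2 * ξ := by
    filter_upwards [hQτ] with ω hω
    have hDle : |D ω| ≤ fbar' / 2 * c ^ 2 := by
      have ht := taylor2_bound (hGderiv ω) (hGyderiv ω) (hGyybd ω) (Q ω) (b ω)
      rw [hω] at ht
      refine ht.trans ?_
      have hsq : (b ω - Q ω) ^ 2 ≤ c ^ 2 := by
        rw [← sq_abs]
        exact pow_le_pow_left₀ (abs_nonneg _) (happrox ω) 2
      nlinarith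
    calc ‖D ω • Z ω‖ = |D ω| * ‖Z ω‖ := by rw [norm_smul, Real.norm_eq_abs]
      _ ≤ fbar' / 2 * c ^ 2 * ξ :=
        mul_le_mul hDle (hξ ω) (norm_nonneg _) (by positivity)
  calc ‖∫ ω, D ω • Z ω ∂P‖ ≤ ∫ ω, ‖D ω • Z ω‖ ∂P := norm_integral_le_integral_norm _
    _ ≤ ∫ _ω, fbar' / 2 * c ^ 2 * ξ ∂P :=
      integral_mono_ae hf2int.norm (integrable_const _) hbound
    _ = fbar' / 2 * c ^ 2 * ξ := by simp
end

section
/- Let 0 < f_min < f̄ and f̄′ > 0 be reals, set b := 1/f̄, and let a ≥ 0 satisfy 2a < min( 1/f_min − 1/f̄ , f̄′·f̄^{−3} ). Then the distribution function F_{a,b} (with F_{0,b}(y) := y/b when a = 0) satisfies f_min ≤ F′_{a,b}(y) ≤ f̄ and |F″_{a,b}(y)| ≤ f̄′ for all y ∈ [0, a+b]. -/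
/-!
Both cases of `F_{a,b}` have density `y ↦ (b² + 4ay)^{-1/2}` (for `a = 0` because `√(b²) = b`),
hence `F″(y) = -2a (b² + 4ay)^{-3/2}`. On `[0, a + b]` the root `√(b² + 4ay)` lies in
`[b, b + 2a]`, and the two constraints on `2a` are exactly what turns this into
`f_min ≤ F′ ≤ 1/b = f̄` and `|F″| ≤ 2a/b³ = 2a f̄³ ≤ f̄′`.
-/

open Filter Topology

open scoped Classical

noncomputable def quadraticQuantileCDF (a b : ℝ) : ℝ → ℝ :=
  if a = 0 then fun y => y / b else fun y => (-b + √(b ^ 2 + 4 * a * y)) / (2 * a)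

section QuadraticQuantile

variable {a b y : ℝ}

theorem hasDerivAt_sqrt_affine (hy : 0 < b ^ 2 + 4 * a * y) :
    HasDerivAt (fun z => √(b ^ 2 + 4 * a * z)) (2 * a / √(b ^ 2 + 4 * a * y)) y := by
  have hlin : HasDerivAt (fun z => b ^ 2 + 4 * a * z) (4 * a) y := by
    simpa using ((hasDerivAt_id y).const_mul (4 * a)).const_add (b ^ 2)
  refine ((Real.hasDerivAt_sqrt hy.ne').comp y hlin).congr_deriv ?_
  field_simp
  ring

theorem hasDerivAt_inv_sqrt_affine (hy : 0 < b ^ 2 + 4 * a * y) :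
    HasDerivAt (fun z => (√(b ^ 2 + 4 * a * z))⁻¹) (-(2 * a / √(b ^ 2 + 4 * a * y) ^ 3)) y := by
  have hr : 0 < √(b ^ 2 + 4 * a * y) := Real.sqrt_pos.mpr hy
  refine ((hasDerivAt_sqrt_affine hy).inv hr.ne').congr_deriv ?_
  field_simp

theorem sqrt_affine_mem_Icc (hb : 0 < b) (ha : 0 ≤ a) (hy : y ∈ Set.Icc 0 (a + b)) :
    √(b ^ 2 + 4 * a * y) ∈ Set.Icc b (b + 2 * a) := by
  constructor
  · exact Real.le_sqrt_of_sq_le (by nlinarith [hy.1])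
  · exact Real.sqrt_le_iff.mpr ⟨by positivity, by nlinarith [hy.2]⟩

theorem hasDerivAt_quadraticQuantileCDF (ha : a ≠ 0) (hy : 0 < b ^ 2 + 4 * a * y) :
    HasDerivAt (quadraticQuantileCDF a b) (√(b ^ 2 + 4 * a * y))⁻¹ y := by
  have hr : √(b ^ 2 + 4 * a * y) ≠ 0 := (Real.sqrt_pos.mpr hy).ne'
  rw [quadraticQuantileCDF, if_neg ha]
  refine (((hasDerivAt_sqrt_affine hy).const_add (-b)).div_const (2 * a)).congr_deriv ?_
  field_simp

theorem deriv_quadraticQuantileCDF_eventuallyEq (hb : 0 < b) (hy : 0 < b ^ 2 + 4 * a * y) :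
    deriv (quadraticQuantileCDF a b) =ᶠ[𝓝 y] fun z => (√(b ^ 2 + 4 * a * z))⁻¹ := by
  by_cases ha : a = 0
  · subst ha
    refine Eventually.of_forall fun z => ?_
    simp [quadraticQuantileCDF, Real.sqrt_sq hb.le]
  · have hpos : ∀ᶠ z in 𝓝 y, 0 < b ^ 2 + 4 * a * z :=
      continuousAt_const.eventually_lt (by fun_prop) hy
    filter_upwards [hpos] with z hz
    exact (hasDerivAt_quadraticQuantileCDF ha hz).deriv

theorem deriv_quadraticQuantileCDF (hb : 0 < b) (hy : 0 < b ^ 2 + 4 * a * y) :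
    deriv (quadraticQuantileCDF a b) y = (√(b ^ 2 + 4 * a * y))⁻¹ :=
  (deriv_quadraticQuantileCDF_eventuallyEq hb hy).eq_of_nhds

theorem deriv_deriv_quadraticQuantileCDF (hb : 0 < b) (hy : 0 < b ^ 2 + 4 * a * y) :
    deriv (deriv (quadraticQuantileCDF a b)) y = -(2 * a / √(b ^ 2 + 4 * a * y) ^ 3) := by
  rw [(deriv_quadraticQuantileCDF_eventuallyEq hb hy).deriv_eq]
  exact (hasDerivAt_inv_sqrt_affine hy).deriv

end QuadraticQuantile

theorem stmt12_general (fmin fbar fbar' : ℝ) (h0 : 0 < fmin) (h1 : fmin < fbar)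
    (a : ℝ) (ha : 0 ≤ a)
    (haub : 2 * a < min (1 / fmin - 1 / fbar) (fbar' / fbar ^ 3)) :
    let b : ℝ := 1 / fbar
    let F : ℝ → ℝ := if a = 0 then (fun y => y / b)
      else fun y => (-b + Real.sqrt (b ^ 2 + 4 * a * y)) / (2 * a)
    ∀ y ∈ Set.Icc (0 : ℝ) (a + b),
      fmin ≤ deriv F y ∧ deriv F y ≤ fbar ∧ |deriv (deriv F) y| ≤ fbar' := by
  intro b F y hy
  have hfbar : 0 < fbar := h0.trans h1
  have hb : 0 < b := one_div_pos.mpr hfbar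
  have hs : 0 < b ^ 2 + 4 * a * y := by nlinarith [hy.1]
  change fmin ≤ deriv (quadraticQuantileCDF a b) y ∧ deriv (quadraticQuantileCDF a b) y ≤ fbar ∧
    |deriv (deriv (quadraticQuantileCDF a b)) y| ≤ fbar'
  rw [deriv_quadraticQuantileCDF hb hs, deriv_deriv_quadraticQuantileCDF hb hs]
  obtain ⟨hbr, hrab⟩ := sqrt_affine_mem_Icc hb ha hy
  set r := √(b ^ 2 + 4 * a * y)
  have hr : 0 < r := hb.trans_le hbr
  have hmin := haub.trans_le (min_le_left _ _)
  have hmax := haub.trans_le (min_le_right _ _)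
  refine ⟨?_, ?_, ?_⟩
  · rw [le_inv_comm₀ h0 hr, ← one_div]
    linarith
  · rw [inv_le_comm₀ hr hfbar, ← one_div]
    exact hbr
  · rw [abs_neg, abs_of_nonneg (by positivity)]
    calc 2 * a / r ^ 3 ≤ 2 * a / b ^ 3 := by gcongr
      _ = 2 * a * fbar ^ 3 := by simp only [b]; field_simp
      _ ≤ fbar' := by rw [← le_div_iff₀ (by positivity)]; exact hmax.le

theorem stmt12 (fmin fbar fbar' : ℝ) (h0 : 0 < fmin) (h1 : fmin < fbar) (h2 : 0 < fbar')
    (a : ℝ) (ha : 0 ≤ a)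
    (haub : 2 * a < min (1 / fmin - 1 / fbar) (fbar' / fbar ^ 3)) :
    let b : ℝ := 1 / fbar
    let F : ℝ → ℝ := if a = 0 then (fun y => y / b)
      else fun y => (-b + Real.sqrt (b ^ 2 + 4 * a * y)) / (2 * a)
    ∀ y ∈ Set.Icc (0 : ℝ) (a + b),
      fmin ≤ deriv F y ∧ deriv F y ≤ fbar ∧ |deriv (deriv F) y| ≤ fbar' :=
  stmt12_general fmin fbar fbar' h0 h1 a ha haub
end

section
/- Let r ≥ 1 be an integer, τ_L < τ_U reals, and τ_L = t_0 < t_1 < … < t_G = τ_U a grid. Let g : ℝ → ℝ vanish outside (−1,1) and set d := inf over all real polynomials p of degree at most r of sup_{x ∈ [−1,1]} |g(x) − p(x)|. Suppose s ∈ ℝ and h > 0 satisfy [s−h, s+h] ⊆ [t_ν, t_{ν+1}] for some ν, and define Q(τ) := a·τ + c·g((τ − s)/h) for reals a and c > 0. Then every piecewise polynomial P of degree at most r on the grid satisfies sup_{τ ∈ [τ_L, τ_U]} |Q(τ) − P(τ)| ≥ c·d. -/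
/-!
On the knot interval `[t ν, t (ν+1)] ⊇ [s - h, s + h]` the piecewise polynomial `P` is a single
polynomial `p` of degree `≤ r`. The affine substitution `τ = s + h x` maps `[-1, 1]` onto
`[s - h, s + h]` and turns `(Q - P) / c` into `g - q` with `q = (p (s + h x) - a (s + h x)) / c`,
again of degree `≤ r` since `r ≥ 1`. So any bound `M` on `|Q - P|` gives the bound `M / c` for
the approximation of `g` by `q` on `[-1, 1]`, whence `d ≤ M / c`.
-/

open Polynomial Set

/-- `sInf (polyApproxBounds r g (Icc (-1) 1))` is the approximation error `d`. -/
def polyApproxBounds (r : ℕ) (g : ℝ → ℝ) (K : Set ℝ) : Set ℝ :=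
  {M | ∃ p : ℝ[X], p.natDegree ≤ r ∧ ∀ x ∈ K, |g x - p.eval x| ≤ M}

lemma csInf_polyApproxBounds_le {r : ℕ} {g : ℝ → ℝ} {K : Set ℝ} (hK : K.Nonempty) {M : ℝ}
    (hM : M ∈ polyApproxBounds r g K) : sInf (polyApproxBounds r g K) ≤ M := by
  refine csInf_le ⟨0, ?_⟩ hM
  rintro m ⟨p, -, hp⟩
  obtain ⟨x, hx⟩ := hK
  exact (abs_nonneg _).trans (hp x hx)

lemma natDegree_comp_linear_le {R : Type*} [Semiring R] (p : R[X]) (h s : R) :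
    (p.comp (C h * X + C s)).natDegree ≤ p.natDegree :=
  natDegree_comp_le.trans <|
    (Nat.mul_le_mul_left _ (natDegree_linear_le (a := h) (b := s))).trans (Nat.mul_one _).le

lemma div_mem_polyApproxBounds_of_rescaled {r : ℕ} (hr : 1 ≤ r) {g : ℝ → ℝ} {s h a c M : ℝ}
    (hh : 0 < h) (hc : 0 < c) {p : ℝ[X]} (hp : p.natDegree ≤ r)
    (hM : ∀ τ ∈ Icc (s - h) (s + h), |a * τ + c * g ((τ - s) / h) - p.eval τ| ≤ M) :
    M / c ∈ polyApproxBounds r g (Icc (-1) 1) := by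
  set L : ℝ[X] := C h * X + C s
  refine ⟨C c⁻¹ * (p.comp L - C a * L), ?_, fun x hx => ?_⟩
  · refine (natDegree_C_mul_le _ _).trans <| (natDegree_sub_le _ _).trans <| max_le ?_ ?_
    · exact (natDegree_comp_linear_le p h s).trans hp
    · exact (natDegree_C_mul_le _ _).trans (natDegree_linear_le.trans hr)
  have hτ : s + h * x ∈ Icc (s - h) (s + h) := by
    have := mul_le_mul_of_nonneg_left hx.2 hh.le
    have := mul_le_mul_of_nonneg_left hx.1 hh.le
    constructor <;> linarith
  have hbound := hM _ hτ
  rw [add_sub_cancel_left, mul_div_cancel_left₀ _ hh.ne'] at hbound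
  have hrescale : g x - (C c⁻¹ * (p.comp L - C a * L)).eval x
      = (a * (s + h * x) + c * g x - p.eval (s + h * x)) / c := by
    simp only [L, eval_mul, eval_C, eval_sub, eval_comp, eval_add, eval_X, add_comm (h * x) s]
    field_simp
    ring
  rw [hrescale, abs_div, abs_of_pos hc]
  gcongr

lemma Icc_subset_Icc_of_strictMono_grid {α : Type*} [PartialOrder α] {G : ℕ} {t : ℕ → α}
    (ht : ∀ j < G, t j < t (j + 1)) {ν : ℕ} (hν : ν < G) :
    Icc (t ν) (t (ν + 1)) ⊆ Icc (t 0) (t G) := by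
  have hmono : MonotoneOn t (Iic G) :=
    (strictMonoOn_Iic_of_lt_succ fun m hm => by simpa using ht m hm).monotoneOn
  exact Icc_subset_Icc (hmono (by simp) (by simp; omega) (Nat.zero_le ν))
    (hmono (by simp; omega) (by simp) (by omega))

theorem stmt13_general (r : ℕ) (hr : 1 ≤ r) (τL τU : ℝ)
    (G : ℕ) (t : ℕ → ℝ)
    (ht0 : t 0 = τL) (htG : t G = τU) (htmono : ∀ j < G, t j < t (j + 1))
    (g : ℝ → ℝ)
    (s h : ℝ) (hh : 0 < h) (ν : ℕ) (hν : ν < G)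
    (hsub : Set.Icc (s - h) (s + h) ⊆ Set.Icc (t ν) (t (ν + 1)))
    (a c : ℝ) (hc : 0 < c)
    (P : ℝ → ℝ)
    (hP : ∀ j < G, ∃ p : Polynomial ℝ, p.natDegree ≤ r ∧
        ∀ τ ∈ Set.Icc (t j) (t (j + 1)), P τ = p.eval τ)
    (d : ℝ)
    (hd : d = sInf {M : ℝ | ∃ p : Polynomial ℝ, p.natDegree ≤ r ∧
        ∀ x ∈ Set.Icc (-1 : ℝ) 1, |g x - p.eval x| ≤ M}) :
    ∀ M : ℝ, (∀ τ ∈ Set.Icc τL τU, |(a * τ + c * g ((τ - s) / h)) - P τ| ≤ M) →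
      c * d ≤ M := by
  intro M hM
  obtain ⟨p, hpdeg, hpP⟩ := hP ν hν
  have hlocal :
      ∀ τ ∈ Icc (s - h) (s + h), |a * τ + c * g ((τ - s) / h) - p.eval τ| ≤ M := by
    intro τ hτ
    have hτν := hsub hτ
    rw [← hpP τ hτν]
    exact hM τ (ht0 ▸ htG ▸ Icc_subset_Icc_of_strictMono_grid htmono hν hτν)
  have hdM : d ≤ M / c :=
    hd ▸ csInf_polyApproxBounds_le ⟨0, by norm_num⟩
      (div_mem_polyApproxBounds_of_rescaled hr hh hc hpdeg hlocal)
  exact (le_div_iff₀' hc).mp hdM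

theorem stmt13 (r : ℕ) (hr : 1 ≤ r) (τL τU : ℝ) (hτ : τL < τU)
    (G : ℕ) (t : ℕ → ℝ)
    (ht0 : t 0 = τL) (htG : t G = τU) (htmono : ∀ j < G, t j < t (j + 1))
    (g : ℝ → ℝ) (hg : ∀ x, x ∉ Set.Ioo (-1 : ℝ) 1 → g x = 0)
    (s h : ℝ) (hh : 0 < h) (ν : ℕ) (hν : ν < G)
    (hsub : Set.Icc (s - h) (s + h) ⊆ Set.Icc (t ν) (t (ν + 1)))
    (a c : ℝ) (hc : 0 < c)
    (P : ℝ → ℝ)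
    (hP : ∀ j < G, ∃ p : Polynomial ℝ, p.natDegree ≤ r ∧
        ∀ τ ∈ Set.Icc (t j) (t (j + 1)), P τ = p.eval τ)
    (d : ℝ)
    (hd : d = sInf {M : ℝ | ∃ p : Polynomial ℝ, p.natDegree ≤ r ∧
        ∀ x ∈ Set.Icc (-1 : ℝ) 1, |g x - p.eval x| ≤ M}) :
    ∀ M : ℝ, (∀ τ ∈ Set.Icc τL τU, |(a * τ + c * g ((τ - s) / h)) - P τ| ≤ M) →
      c * d ≤ M :=
  stmt13_general r hr τL τU G t ht0 htG htmono g s h hh ν hν hsub a c hc P hP d hd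
end

section
/- Let U be a real random variable on a probability space with 0 ≤ U ≤ 1 almost surely, and let a, b ≥ 0 be reals. Then Var(a·U² + b·U) ≤ 9·( (4a² + b²)·Var(U) + a²·Var(U)² ). -/
open MeasureTheory ProbabilityTheory

theorem stmt14 {Ω : Type*} [MeasurableSpace Ω] (μ : Measure Ω) [IsProbabilityMeasure μ]
    (U : Ω → ℝ) (hUmeas : AEMeasurable U μ)
    (hU01 : ∀ᵐ ω ∂μ, U ω ∈ Set.Icc (0 : ℝ) 1)
    (a b : ℝ) (ha : 0 ≤ a) (hb : 0 ≤ b) :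
    variance (fun ω => a * (U ω) ^ 2 + b * U ω) μ
      ≤ 9 * ((4 * a ^ 2 + b ^ 2) * variance U μ + a ^ 2 * (variance U μ) ^ 2) := by
  set f : Ω → ℝ := fun ω => a * (U ω) ^ 2 + b * U ω with hf
  set m : ℝ := μ[U] with hmdef
  set c : ℝ := a * m ^ 2 + b * m with hcdef
  have hfmeas : AEMeasurable f μ := by
    exact ((hUmeas.pow_const 2).const_mul a).add (hUmeas.const_mul b)
  have hfbd : ∀ᵐ ω ∂μ, f ω ∈ Set.Icc (0 : ℝ) (a + b) := by
    filter_upwards [hU01] with ω hω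
    obtain ⟨h0, h1⟩ := hω
    constructor
    · have : 0 ≤ U ω ^ 2 := sq_nonneg _
      simp only [hf]; positivity
    · have hu2 : U ω ^ 2 ≤ 1 := by nlinarith
      simp only [hf]
      nlinarith [mul_le_mul_of_nonneg_left hu2 ha, mul_le_mul_of_nonneg_left h1 hb]
  have hfℒ : MemLp f 2 μ := memLp_of_bounded hfbd hfmeas.aestronglyMeasurable 2
  have hUℒ : MemLp U 2 μ := memLp_of_bounded hU01 hUmeas.aestronglyMeasurable 2
  have hUint : Integrable U μ := hUℒ.integrable one_le_two
  have hfint : Integrable f μ := hfℒ.integrable one_le_two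
  have hm0 : 0 ≤ m := by
    apply integral_nonneg_of_ae
    filter_upwards [hU01] with ω hω using hω.1
  have hm1 : m ≤ 1 := by
    calc m ≤ ∫ _, (1 : ℝ) ∂μ := by
            apply integral_mono_ae hUint (integrable_const 1)
            filter_upwards [hU01] with ω hω using hω.2
      _ = 1 := by simp
  -- integrability of squares
  have hUsub : MemLp (fun ω => U ω - m) 2 μ := hUℒ.sub (memLp_const m)
  have hUsubsq : Integrable (fun ω => (U ω - m) ^ 2) μ := by
    have := hUsub.integrable_sq
    simpa [pow_two] using this
  have hfsub : MemLp (fun ω => f ω - c) 2 μ := hfℒ.sub (memLp_const c)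
  have hfsubsq : Integrable (fun ω => (f ω - c) ^ 2) μ := by
    have := hfsub.integrable_sq
    simpa [pow_two] using this
  -- variance U = ∫ (U - m)^2
  have hvarU : variance U μ = ∫ ω, (U ω - m) ^ 2 ∂μ := by
    rw [variance_eq_integral hUmeas]
  have hvarU_nonneg : 0 ≤ variance U μ := variance_nonneg U μ
  -- step 1 : variance f ≤ ∫ (f - c)^2
  have hfsq : Integrable (fun ω => f ω ^ 2) μ := by
    have := hfℒ.integrable_sq
    simpa [pow_two] using this
  have hexp : ∫ ω, (f ω - c) ^ 2 ∂μ
      = (∫ ω, f ω ^ 2 ∂μ) - 2 * c * (∫ ω, f ω ∂μ) + c ^ 2 := by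
    have h1 : ∫ ω, (f ω - c) ^ 2 ∂μ
        = ∫ ω, (f ω ^ 2 - (2 * c * f ω - c ^ 2)) ∂μ := by
      apply integral_congr_ae
      filter_upwards with ω
      ring
    have hg2 : Integrable (fun ω => 2 * c * f ω) μ := hfint.const_mul (2 * c)
    have hg : Integrable (fun ω => 2 * c * f ω - c ^ 2) μ := hg2.sub (integrable_const _)
    rw [h1, integral_sub hfsq hg, integral_sub hg2 (integrable_const _), integral_const_mul,
      integral_const]
    simp
    ring
  have step1 : variance f μ ≤ ∫ ω, (f ω - c) ^ 2 ∂μ := by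
    have hvd := variance_eq_sub hfℒ
    have hfsq' : μ[f ^ 2] = ∫ ω, f ω ^ 2 ∂μ := rfl
    rw [hvd, hfsq', hexp]
    nlinarith [sq_nonneg ((∫ ω, f ω ∂μ) - c)]
  -- step 2 : pointwise bound
  have step2 : ∫ ω, (f ω - c) ^ 2 ∂μ ≤ (2 * a + b) ^ 2 * variance U μ := by
    rw [hvarU, ← integral_const_mul]
    apply integral_mono_ae hfsubsq (hUsubsq.const_mul _)
    filter_upwards [hU01] with ω hω
    obtain ⟨h0, h1⟩ := hω
    have hfc : f ω - c = (U ω - m) * (a * (U ω + m) + b) := by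
      simp only [hf, hcdef]; ring
    rw [hfc, mul_pow]
    have hcoef : (a * (U ω + m) + b) ^ 2 ≤ (2 * a + b) ^ 2 := by
      have h2 : 0 ≤ a * (U ω + m) + b := by positivity
      have h3 : a * (U ω + m) + b ≤ 2 * a + b := by nlinarith
      nlinarith
    nlinarith [sq_nonneg (U ω - m)]
  -- combine
  calc variance f μ ≤ (2 * a + b) ^ 2 * variance U μ := le_trans step1 step2
    _ ≤ 9 * ((4 * a ^ 2 + b ^ 2) * variance U μ + a ^ 2 * (variance U μ) ^ 2) := by
        nlinarith [sq_nonneg (2 * a - b), sq_nonneg (a * variance U μ)]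
end
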